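/- Let I₃ = (B, H, c, E) be a variant-3 instance with B nonempty, and fix b₀ ∈ B. Define an MA 1 instance I₁ on the same B, H, c with task set τ = {(b, b₀) : b ∈ B}, discount factor α = 1/2, threshold φ = 2.75, and distance function d given by d(x,x) = 0, d(b,h) = d(h,b) = 1 if (b,h) ∈ E and 2 otherwise (b ∈ B, h ∈ H), d(h,h') = 1 for distinct h, h' ∈ H, and d(b,b') = 2 for distinct b, b' ∈ B. Then a set S ⊆ H is MA 1-feasible for I₁ if and only if S covers B in I₃; consequently the minimum cost of an MA 1-feasible set for I₁ equals the minimum cost of a covering set for I₃. -/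
import Mathlib


/-!
STATEMENT 15: Reduction from a variant-3 instance to an MA 1 instance: with tasks
`{(b, b₀) : b ∈ B}`, discount factor `1/2`, threshold `2.75`, distance 1 on edges of `E`
and between distinct hubs, 2 otherwise (0 on the diagonal), a hub set is MA 1-feasible
iff it covers `B`; consequently the optimal values coincide.
-/

/-- Length of the tour `b → h → h' → b'` with discount factor `α`. -/
def tourLen {B H : Type*} (d : (B ⊕ H) → (B ⊕ H) → ℝ) (α : ℝ)
    (b : B) (h h' : H) (b' : B) : ℝ :=
  d (Sum.inl b) (Sum.inr h) + α * d (Sum.inr h) (Sum.inr h') + d (Sum.inr h') (Sum.inl b')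

/-- A hub set `S` is MA 1-feasible if every task admits a tour through one or two
open hubs of length at most `φ`. -/
def MA1Feasible {B H : Type*} (d : (B ⊕ H) → (B ⊕ H) → ℝ) (α φ : ℝ)
    (τ : Finset (B × B)) (S : Finset H) : Prop :=
  ∀ t ∈ τ, ∃ h ∈ S, ∃ h' ∈ S, tourLen d α t.1 h h' t.2 ≤ φ

/-- A hub set `S` covers `B` (variant 3) if every branch is connected to some open hub. -/
def Covers {B H : Type*} (E : Set (B × H)) (S : Finset H) : Prop :=
  ∀ b : B, ∃ h ∈ S, (b, h) ∈ E

/-- Total opening cost of a hub set. -/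
def cost {H : Type*} (c : H → ℝ) (S : Finset H) : ℝ := ∑ h ∈ S, c h

open scoped Classical in
/-- The distance function of the constructed MA 1 instance: 0 on the diagonal, 1 on
branch–hub edges of `E` and between distinct hubs, and 2 otherwise. -/
noncomputable def redDist3 {B H : Type*} (E : Set (B × H)) :
    (B ⊕ H) → (B ⊕ H) → ℝ
  | Sum.inl b, Sum.inl b' => if b = b' then 0 else 2
  | Sum.inl b, Sum.inr h => if (b, h) ∈ E then 1 else 2
  | Sum.inr h, Sum.inl b => if (b, h) ∈ E then 1 else 2
  | Sum.inr h, Sum.inr h' => if h = h' then 0 else 1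

theorem stmt15 {B H : Type*} [Fintype B] [Fintype H] [DecidableEq B]
    (c : H → ℝ) (hc : ∀ h, 0 ≤ c h)
    (E : Set (B × H)) (b₀ : B) :
    (∀ S : Finset H,
      MA1Feasible (redDist3 E) (1 / 2) 2.75
        (Finset.univ.image fun b : B => (b, b₀)) S ↔ Covers E S) ∧
    (∀ m : ℝ,
      IsLeast {x : ℝ | ∃ S : Finset H,
        MA1Feasible (redDist3 E) (1 / 2) 2.75
          (Finset.univ.image fun b : B => (b, b₀)) S ∧ x = cost c S} m ↔
      IsLeast {x : ℝ | ∃ S : Finset H, Covers E S ∧ x = cost c S} m) := by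
  have key : ∀ S : Finset H,
      MA1Feasible (redDist3 E) (1 / 2) 2.75
        (Finset.univ.image fun b : B => (b, b₀)) S ↔ Covers E S := by
    intro S
    constructor
    · intro hfeas b
      obtain ⟨h, hS, h', h'S, hle⟩ :=
        hfeas (b, b₀) (Finset.mem_image.mpr ⟨b, Finset.mem_univ b, rfl⟩)
      refine ⟨h, hS, ?_⟩
      by_contra hbh
      simp only [tourLen, redDist3] at hle
      rw [if_neg hbh] at hle
      split_ifs at hle <;> norm_num at hle
    · intro hcov t ht
      obtain ⟨b, -, rfl⟩ := Finset.mem_image.mp ht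
      obtain ⟨h, hS, hbh⟩ := hcov b
      obtain ⟨h', h'S, hb0⟩ := hcov b₀
      refine ⟨h, hS, h', h'S, ?_⟩
      simp only [tourLen, redDist3, if_pos hbh, if_pos hb0]
      split_ifs <;> norm_num
  refine ⟨key, fun m => ?_⟩
  have hset : {x : ℝ | ∃ S : Finset H,
      MA1Feasible (redDist3 E) (1 / 2) 2.75
        (Finset.univ.image fun b : B => (b, b₀)) S ∧ x = cost c S}
      = {x : ℝ | ∃ S : Finset H, Covers E S ∧ x = cost c S} := by
    ext x
    simp only [Set.mem_setOf_eq, key]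
  rw [hset]
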